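/- arXiv:1710.08340 — 4 statements merged into one kernel-verified Lean document; each statement's English description precedes it below -/
import Mathlib

section
/- With C = ∂R(0), Ĉ_sh = C ∩ Ẑ* as above, and assuming every restriction v ↦ R(χ(w,v)) is coercive, the following are equivalent: (i) for every z̃ ∈ Z there is a unique minimizer x̃ of R on the affine set {x : σ(x) = z̃}; (ii) for every ξ ∈ Ĉ_sh and every x₁, x₂ in the normal cone N_C(ξ), σ(x₁) = σ(x₂) implies x₁ = x₂. -/
/-!
Call `x` exact for `ξ ∈ C` if `ξ x = R x`. For `ξ ∈ C`, `x ∈ N_C(ξ)` iff `x` is exact for `ξ`: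
compare `ξ` with a Hahn–Banach support functional of the sublinear `R` at `x`. A point exact for
some `ξ ∈ Ĉ_sh` minimizes `R` on its fibre, which gives (i) ⇒ (ii). Conversely every fibre
minimizer `x` is exact for some `ξ ∈ Ĉ_sh`: the marginal `Q z = min {R x | σ x = z}` is sublinear
on `Z`, and a support functional `η` of `Q` at `σ x` gives `ξ = η ∘ σ`. All minimizers of that
fibre are then exact for the same `ξ`, and (ii) identifies them.
-/
open Filter

section Sublinear

variable {E : Type*} [AddCommGroup E] [Module ℝ E] {N : E → ℝ}

lemma ConvexOn.add_le_of_pos_homogeneous (hN : ConvexOn ℝ Set.univ N)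
    (hhom : ∀ c : ℝ, 0 < c → ∀ x, N (c • x) = c * N x) (a b : E) :
    N (a + b) ≤ N a + N b := by
  have hmid := hN.2 (Set.mem_univ a) (Set.mem_univ b)
    (by norm_num : (0 : ℝ) ≤ 1 / 2) (by norm_num : (0 : ℝ) ≤ 1 / 2) (by norm_num)
  calc N (a + b) = 2 * N ((1 / 2 : ℝ) • a + (1 / 2 : ℝ) • b) := by
        rw [← hhom 2 two_pos, smul_add, smul_smul, smul_smul]
        norm_num
    _ ≤ N a + N b := by
        simp only [smul_eq_mul] at hmid
        linarith

lemma exists_linearMap_le_and_eq_of_sublinear (hadd : ∀ a b, N (a + b) ≤ N a + N b)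
    (hhom : ∀ c : ℝ, 0 < c → ∀ x, N (c • x) = c * N x) (x₀ : E) :
    ∃ g : E →ₗ[ℝ] ℝ, (∀ y, g y ≤ N y) ∧ g x₀ = N x₀ := by
  have hN0 : N 0 = 0 := by
    have := hhom 2 two_pos 0
    rw [smul_zero] at this
    linarith
  have hker : ∀ c : ℝ, c • x₀ = 0 → c • N x₀ = 0 := by
    intro c hc
    rcases smul_eq_zero.mp hc with rfl | rfl
    · exact zero_smul ℝ _
    · rw [hN0, smul_zero]
  have hline : ∀ c : ℝ, c * N x₀ ≤ N (c • x₀) := by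
    intro c
    rcases lt_trichotomy c 0 with hc | rfl | hc
    · -- `0 = N (c • x₀ + (-c) • x₀) ≤ N (c • x₀) - c * N x₀`
      have := hadd (c • x₀) ((-c) • x₀)
      rw [← add_smul, add_neg_cancel, zero_smul, hN0, hhom (-c) (neg_pos.mpr hc)] at this
      linarith
    · rw [zero_smul, hN0, zero_mul]
    · exact (hhom c hc x₀).ge
  let f := LinearPMap.mkSpanSingleton' (σ := RingHom.id ℝ) x₀ (N x₀) hker
  have hfN : ∀ t : f.domain, f t ≤ N t := by
    rintro ⟨_, ht⟩
    obtain ⟨c, rfl⟩ := Submodule.mem_span_singleton.mp ht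
    rw [LinearPMap.mkSpanSingleton'_apply, RingHom.id_apply, smul_eq_mul]
    exact hline c
  obtain ⟨g, hgf, hgN⟩ := exists_extension_of_le_sublinear f N hhom hadd hfN
  have hx₀ : x₀ ∈ f.domain := Submodule.mem_span_singleton_self x₀
  exact ⟨g, hgN, (hgf ⟨x₀, hx₀⟩).trans (LinearPMap.mkSpanSingleton'_apply_self _ _ _ hx₀)⟩

end Sublinear

lemma normalCone_iff_apply_eq {X : Type*} [NormedAddCommGroup X] [NormedSpace ℝ X]
    [FiniteDimensional ℝ X] {R : X → ℝ} (hadd : ∀ a b, R (a + b) ≤ R a + R b)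
    (hhom : ∀ c : ℝ, 0 < c → ∀ x, R (c • x) = c * R x) {ξ : X →L[ℝ] ℝ}
    (hξ : ∀ x, ξ x ≤ R x) (x : X) :
    (∀ ξ' : X →L[ℝ] ℝ, (∀ y, ξ' y ≤ R y) → ξ' x - ξ x ≤ 0) ↔ ξ x = R x := by
  refine ⟨fun hx => ?_, fun hx ξ' hξ' => by linarith [hξ' x]⟩
  obtain ⟨g, hgR, hgx⟩ := exists_linearMap_le_and_eq_of_sublinear hadd hhom x
  have := hx (LinearMap.toContinuousLinearMap g) hgR
  rw [LinearMap.coe_toContinuousLinearMap', hgx] at this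
  linarith [hξ x]

lemma exists_le_comp_and_eq_of_minOn_fiber {X Z : Type*} [AddCommGroup X] [Module ℝ X]
    [AddCommGroup Z] [Module ℝ Z] {F : Type*} [FunLike F X Z] [LinearMapClass F ℝ X Z]
    {σ : F} {R : X → ℝ}
    (hadd : ∀ a b, R (a + b) ≤ R a + R b) (hhom : ∀ c : ℝ, 0 < c → ∀ x, R (c • x) = c * R x)
    (hmin : ∀ z, ∃ x, σ x = z ∧ ∀ x', σ x' = z → R x ≤ R x')
    {x₀ : X} (hx₀ : ∀ x', σ x' = σ x₀ → R x₀ ≤ R x') :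
    ∃ η : Z →ₗ[ℝ] ℝ, (∀ x, η (σ x) ≤ R x) ∧ η (σ x₀) = R x₀ := by
  choose m hmσ hmR using hmin
  let Q : Z → ℝ := fun z => R (m z)
  have hQR : ∀ x, Q (σ x) ≤ R x := fun x => hmR _ x rfl
  have hQadd : ∀ a b, Q (a + b) ≤ Q a + Q b := fun a b =>
    (hmR _ (m a + m b) (by rw [map_add, hmσ, hmσ])).trans (hadd _ _)
  have hQhom : ∀ c : ℝ, 0 < c → ∀ z, Q (c • z) = c * Q z := by
    intro c hc z
    refine le_antisymm ((hmR _ (c • m z) (by rw [map_smul, hmσ])).trans_eq (hhom c hc _)) ?_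
    have hle : Q z ≤ R (c⁻¹ • m (c • z)) :=
      hmR _ _ (by rw [map_smul, hmσ, smul_smul, inv_mul_cancel₀ hc.ne', one_smul])
    rw [hhom _ (inv_pos.mpr hc)] at hle
    calc c * Q z ≤ c * (c⁻¹ * Q (c • z)) := by gcongr
      _ = Q (c • z) := by field_simp
  obtain ⟨η, hηQ, hηx₀⟩ := exists_linearMap_le_and_eq_of_sublinear hQadd hQhom (σ x₀)
  exact ⟨η, fun x => (hηQ _).trans (hQR x),
    hηx₀.trans (le_antisymm (hQR x₀) (hx₀ _ (hmσ _)))⟩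

lemma exists_minOn_fiber_of_tendsto_cocompact {Z Y X : Type*} [TopologicalSpace Z]
    [AddCommGroup Z] [Module ℝ Z] [TopologicalSpace Y] [AddCommGroup Y] [Module ℝ Y]
    [TopologicalSpace X] [AddCommGroup X] [Module ℝ X] (χ : (Z × Y) ≃L[ℝ] X) {R : X → ℝ}
    (hcont : Continuous R) (hcoer : ∀ w, Tendsto (fun v => R (χ (w, v))) (cocompact Y) atTop)
    (z : Z) : ∃ x, (χ.symm x).1 = z ∧ ∀ x', (χ.symm x').1 = z → R x ≤ R x' := by
  obtain ⟨v, hv⟩ := (hcont.comp (χ.continuous.comp (Continuous.prodMk_right z))).exists_forall_le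
    (hcoer z)
  refine ⟨χ (z, v), by simp, fun x' hx' => ?_⟩
  subst hx'
  have : R (χ ((χ.symm x').1, v)) ≤ R (χ ((χ.symm x').1, (χ.symm x').2)) := hv _
  rwa [Prod.mk.eta, χ.apply_symm_apply] at this

theorem stmt7_general {Z Y X : Type*}
    [NormedAddCommGroup Z] [NormedSpace ℝ Z]
    [NormedAddCommGroup Y] [NormedSpace ℝ Y]
    [NormedAddCommGroup X] [NormedSpace ℝ X] [FiniteDimensional ℝ X]
    (χ : (Z × Y) ≃L[ℝ] X)
    (R : X → ℝ)
    (hconv : ConvexOn ℝ Set.univ R)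
    (hcont : Continuous R)
    (hhom : ∀ c : ℝ, 0 ≤ c → ∀ x, R (c • x) = c * R x)
    (σ : X → Z) (hσ : ∀ x, σ x = (χ.symm x).1)
    (hcoer : ∀ w : Z,
      Filter.Tendsto (fun v : Y => R (χ (w, v))) (Filter.cocompact Y) Filter.atTop) :
    (∀ z : Z, ∃! x : X, σ x = z ∧ ∀ x' : X, σ x' = z → R x ≤ R x') ↔
    (∀ ξ : X →L[ℝ] ℝ,
      (∀ x, ξ x ≤ R x) →
      (∀ x₁ x₂ : X, σ x₁ = σ x₂ → ξ x₁ = ξ x₂) →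
      ∀ x₁ x₂ : X,
        (∀ ξ' : X →L[ℝ] ℝ, (∀ x, ξ' x ≤ R x) → ξ' x₁ - ξ x₁ ≤ 0) →
        (∀ ξ' : X →L[ℝ] ℝ, (∀ x, ξ' x ≤ R x) → ξ' x₂ - ξ x₂ ≤ 0) →
        σ x₁ = σ x₂ → x₁ = x₂) := by
  have hhom' : ∀ c : ℝ, 0 < c → ∀ x, R (c • x) = c * R x := fun c hc => hhom c hc.le
  have hadd := hconv.add_le_of_pos_homogeneous hhom'
  let σL : X →L[ℝ] Z := (ContinuousLinearMap.fst ℝ Z Y).comp (χ.symm : X →L[ℝ] Z × Y)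
  obtain rfl : σ = σL := funext hσ
  have hmin : ∀ z, ∃ x, σL x = z ∧ ∀ x', σL x' = z → R x ≤ R x' :=
    exists_minOn_fiber_of_tendsto_cocompact χ hcont hcoer
  constructor
  · intro huniq ξ hξ hξσ x₁ x₂ hx₁ hx₂ h₁₂
    have hminOn : ∀ x, ξ x = R x → ∀ x', σL x' = σL x → R x ≤ R x' := fun x hx x' h => by
      linarith [hξ x', hξσ x' x h]
    rw [normalCone_iff_apply_eq hadd hhom' hξ] at hx₁ hx₂
    obtain ⟨_, _, hx⟩ := huniq (σL x₁)
    rw [hx x₁ ⟨rfl, hminOn x₁ hx₁⟩,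
      hx x₂ ⟨h₁₂.symm, fun x' h => hminOn x₂ hx₂ x' (h.trans h₁₂)⟩]
  · intro hinj z
    obtain ⟨x, hxz, hxR⟩ := hmin z
    refine ⟨x, ⟨hxz, hxR⟩, fun x' ⟨hx'z, hx'R⟩ => ?_⟩
    obtain ⟨η, hηR, hηx⟩ := exists_le_comp_and_eq_of_minOn_fiber (σ := σL)
      hadd hhom' hmin (hxz ▸ hxR)
    let ξ : X →L[ℝ] ℝ := LinearMap.toContinuousLinearMap (η ∘ₗ (σL : X →ₗ[ℝ] Z))
    have hξR : ∀ y, ξ y ≤ R y := hηR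
    have hξx' : ξ x' = R x' := by
      show η (σL x') = R x'
      rw [hx'z, ← hxz, hηx]
      exact le_antisymm (hxR x' hx'z) (hx'R x hxz)
    refine hinj ξ hξR (fun _ _ h => congrArg η h) x' x ?_ ?_ (hx'z.trans hxz.symm)
    · exact (normalCone_iff_apply_eq hadd hhom' hξR x').2 hξx'
    · exact (normalCone_iff_apply_eq hadd hhom' hξR x).2 hηx

/-- Equivalence between the uniqueness condition (*) (unique minimizer of `R` on each
fiber of the shape map) and injectivity of `σ` on normal cones `N_C(ξ)` at points
`ξ ∈ Ĉ_sh = C ∩ Ẑ*`. -/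
theorem stmt7 {Z Y X : Type*}
    [NormedAddCommGroup Z] [NormedSpace ℝ Z] [FiniteDimensional ℝ Z]
    [NormedAddCommGroup Y] [NormedSpace ℝ Y] [FiniteDimensional ℝ Y]
    [NormedAddCommGroup X] [NormedSpace ℝ X] [FiniteDimensional ℝ X]
    (χ : (Z × Y) ≃L[ℝ] X)
    (R : X → ℝ) (hR0 : ∀ x, 0 ≤ R x)
    (hconv : ConvexOn ℝ Set.univ R)
    (hcont : Continuous R)
    (hhom : ∀ c : ℝ, 0 ≤ c → ∀ x, R (c • x) = c * R x)
    (σ : X → Z) (hσ : ∀ x, σ x = (χ.symm x).1)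
    (hcoer : ∀ w : Z,
      Filter.Tendsto (fun v : Y => R (χ (w, v))) (Filter.cocompact Y) Filter.atTop) :
    (∀ z : Z, ∃! x : X, σ x = z ∧ ∀ x' : X, σ x' = z → R x ≤ R x') ↔
    (∀ ξ : X →L[ℝ] ℝ,
      (∀ x, ξ x ≤ R x) →
      (∀ x₁ x₂ : X, σ x₁ = σ x₂ → ξ x₁ = ξ x₂) →
      ∀ x₁ x₂ : X,
        (∀ ξ' : X →L[ℝ] ℝ, (∀ x, ξ' x ≤ R x) → ξ' x₁ - ξ x₁ ≤ 0) →
        (∀ ξ' : X →L[ℝ] ℝ, (∀ x, ξ' x ≤ R x) → ξ' x₂ - ξ x₂ ≤ 0) →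
        σ x₁ = σ x₂ → x₁ = x₂) :=
  stmt7_general χ R hconv hcont hhom σ hσ hcoer
end

section
/- Let μ₋, μ₊ > 0 and define R : ℝᴺ → ℝ by R(u) = Σᵢ r(uᵢ), where r(s) = μ₊ s for s ≥ 0 and r(s) = −μ₋ s for s ≤ 0. Then the following are equivalent: (i) for every m ∈ {0,1,…,N}, m·μ₋ − (N−m)·μ₊ ≠ 0; (ii) for every z̃ ∈ ℝ^{N−1} the restriction of R to the line {x ∈ ℝᴺ : x_{i+1} − x_i = z̃_i for all i} has a unique minimizer. -/
open Finset Filter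

private noncomputable def rr (μm μp s : ℝ) : ℝ := if 0 ≤ s then μp * s else -(μm * s)

private lemma rr_eq_max {μm μp : ℝ} (hm : 0 ≤ μm) (hp : 0 ≤ μp) (s : ℝ) :
    rr μm μp s = max (μp * s) (-(μm * s)) := by
  unfold rr
  rcases le_or_gt 0 s with h | h
  · rw [if_pos h, max_eq_left (by nlinarith)]
  · rw [if_neg (not_le.mpr h), max_eq_right (by nlinarith)]

private lemma rr_nonneg {μm μp : ℝ} (hm : 0 ≤ μm) (hp : 0 ≤ μp) (s : ℝ) :
    0 ≤ rr μm μp s := by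
  unfold rr; split_ifs with h
  · nlinarith
  · nlinarith

private lemma shape_diff (n : ℕ) (x y : Fin (n+1) → ℝ)
    (h : ∀ i : Fin n, x i.succ - x i.castSucc = y i.succ - y i.castSucc) :
    ∀ j : Fin (n+1), y j = x j + (y 0 - x 0) := by
  intro j
  induction j using Fin.induction with
  | zero => ring
  | succ i ih =>
    have hh := h i
    linarith

private lemma sign_stable {u t t' : ℝ} (hne : u + t ≠ 0) (h : |t' - t| < |u + t|) :
    (0 ≤ u + t' ↔ 0 ≤ u + t) := by
  rw [abs_lt] at h
  rcases lt_or_gt_of_ne hne with hneg | hpos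
  · rw [abs_of_neg hneg] at h
    constructor <;> intro <;> linarith
  · rw [abs_of_pos hpos] at h
    constructor <;> intro <;> linarith

private lemma exists_min (n : ℕ) (μm μp : ℝ) (hm : 0 < μm) (hp : 0 < μp)
    (a : Fin (n+1) → ℝ) :
    ∃ t0 : ℝ, ∀ t, (∑ i, rr μm μp (a i + t0)) ≤ ∑ i, rr μm μp (a i + t) := by
  have hcont : Continuous (fun t => ∑ i, rr μm μp (a i + t)) := by
    apply continuous_finset_sum
    intro i _
    have he : (fun t => rr μm μp (a i + t)) =
        fun t => max (μp * (a i + t)) (-(μm * (a i + t))) :=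
      funext fun t => rr_eq_max hm.le hp.le _
    rw [he]
    exact ((continuous_const.mul (continuous_const.add continuous_id)).max
      (continuous_const.mul (continuous_const.add continuous_id)).neg)
  set c := min μm μp with hc
  have hcpos : 0 < c := lt_min hm hp
  have hlow : ∀ t, c * |t| - c * |a 0| ≤ ∑ i, rr μm μp (a i + t) := by
    intro t
    have h1 : rr μm μp (a 0 + t) ≤ ∑ i, rr μm μp (a i + t) :=
      Finset.single_le_sum (f := fun i => rr μm μp (a i + t))
        (fun i _ => rr_nonneg hm.le hp.le _) (Finset.mem_univ (0 : Fin (n+1)))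
    have h2 : c * |a 0 + t| ≤ rr μm μp (a 0 + t) := by
      unfold rr; split_ifs with h
      · rw [abs_of_nonneg h]; nlinarith [min_le_right μm μp]
      · rw [abs_of_neg (not_le.mp h)]; nlinarith [min_le_left μm μp]
    have h3 : |t| - |a 0| ≤ |a 0 + t| := by
      have h4 := abs_add_le (a 0 + t) (-(a 0))
      simp only [add_neg_cancel_comm, abs_neg] at h4
      linarith
    have h5 := mul_le_mul_of_nonneg_left h3 hcpos.le
    linarith
  have htend : Tendsto (fun t => ∑ i, rr μm μp (a i + t)) (cocompact ℝ) atTop := by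
    apply tendsto_atTop_mono hlow
    have h1 : Tendsto (fun t : ℝ => |t|) (cocompact ℝ) atTop := by
      convert tendsto_norm_cocompact_atTop (E := ℝ) using 1
      funext t
      exact (Real.norm_eq_abs t).symm
    have h2 := h1.const_mul_atTop hcpos
    simpa [sub_eq_add_neg] using tendsto_atTop_add_const_right (cocompact ℝ) (-(c * |a 0|)) h2
  exact hcont.exists_forall_le htend

private lemma plateau (n : ℕ) (μm μp : ℝ) (hm : 0 < μm) (hp : 0 < μp)
    (a : Fin (n+1) → ℝ) (t1 t2 : ℝ) (hlt : t1 < t2)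
    (hmin1 : ∀ t, (∑ i, rr μm μp (a i + t1)) ≤ ∑ i, rr μm μp (a i + t))
    (hmin2 : ∀ t, (∑ i, rr μm μp (a i + t2)) ≤ ∑ i, rr μm μp (a i + t)) :
    ∃ m : ℕ, m ≤ n + 1 ∧ (m : ℝ) * μm - ((n : ℝ) + 1 - m) * μp = 0 := by
  classical
  set F : ℝ → ℝ := fun t => ∑ i, rr μm μp (a i + t) with hF
  have heq12 : F t2 = F t1 := le_antisymm (hmin2 t1) (hmin1 t2)
  have hconst : ∀ t ∈ Set.Icc t1 t2, F t = F t1 := by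
    intro t ht
    refine le_antisymm ?_ (hmin1 t)
    set s := (t - t1)/(t2 - t1) with hs
    have hd : 0 < t2 - t1 := by linarith
    have hs0 : 0 ≤ s := div_nonneg (by linarith [ht.1]) hd.le
    have hs1 : s ≤ 1 := (div_le_one hd).mpr (by linarith [ht.2])
    have ht' : t = (1 - s)*t1 + s*t2 := by
      have h := div_mul_cancel₀ (t - t1) hd.ne'
      rw [← hs] at h
      linear_combination -h
    have key : ∀ i ∈ (Finset.univ : Finset (Fin (n+1))),
        rr μm μp (a i + t) ≤ (1-s) * rr μm μp (a i + t1) + s * rr μm μp (a i + t2) := by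
      intro i _
      rw [rr_eq_max hm.le hp.le, rr_eq_max hm.le hp.le, rr_eq_max hm.le hp.le]
      apply max_le
      · have h1 : μp * (a i + t) = (1-s)*(μp*(a i + t1)) + s*(μp*(a i + t2)) := by
          rw [ht']; ring
        rw [h1]
        exact add_le_add (mul_le_mul_of_nonneg_left (le_max_left _ _) (by linarith))
          (mul_le_mul_of_nonneg_left (le_max_left _ _) hs0)
      · have h1 : -(μm * (a i + t)) = (1-s)*(-(μm*(a i + t1))) + s*(-(μm*(a i + t2))) := by
          rw [ht']; ring
        rw [h1]
        exact add_le_add (mul_le_mul_of_nonneg_left (le_max_right _ _) (by linarith))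
          (mul_le_mul_of_nonneg_left (le_max_right _ _) hs0)
    calc F t ≤ ∑ i, ((1-s) * rr μm μp (a i + t1) + s * rr μm μp (a i + t2)) :=
          Finset.sum_le_sum key
      _ = (1-s) * F t1 + s * F t2 := by
          rw [Finset.sum_add_distrib, ← Finset.mul_sum, ← Finset.mul_sum]
      _ = F t1 := by rw [heq12]; ring
  obtain ⟨ts, htsI, htsR⟩ :=
    ((Set.Ioo_infinite hlt).diff (Set.finite_range fun i => -a i)).nonempty
  have hne : ∀ i, a i + ts ≠ 0 := by
    intro i h
    exact htsR ⟨i, show -a i = ts by linarith⟩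
  have hNe : (Finset.univ : Finset (Fin (n+1))).Nonempty := Finset.univ_nonempty
  set δ := Finset.univ.inf' hNe (fun i => |a i + ts|) with hδ
  have hδpos : 0 < δ := by
    rw [hδ, Finset.lt_inf'_iff]
    intro i _
    exact abs_pos.mpr (hne i)
  have hδle : ∀ i, δ ≤ |a i + ts| := fun i => Finset.inf'_le _ (Finset.mem_univ i)
  have hts1 : t1 < ts := htsI.1
  have hts2 : ts < t2 := htsI.2
  set t2' := ts + min (δ/2) ((t2 - ts)/2) with ht2'
  have hmin_pos : 0 < min (δ/2) ((t2 - ts)/2) := lt_min (by linarith) (by linarith)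
  have hm1 := min_le_left (δ/2) ((t2 - ts)/2)
  have hm2 := min_le_right (δ/2) ((t2 - ts)/2)
  have ht2'mem : t2' ∈ Set.Icc t1 t2 := ⟨by rw [ht2']; linarith, by rw [ht2']; linarith⟩
  have habs : ∀ i, |t2' - ts| < |a i + ts| := by
    intro i
    have e : t2' - ts = min (δ/2) ((t2 - ts)/2) := by rw [ht2']; ring
    rw [e, abs_of_pos hmin_pos]
    have := hδle i
    linarith
  have hdiff : F t2' - F ts = (∑ i, (if 0 ≤ a i + ts then μp else -μm)) * (t2' - ts) := by
    rw [hF]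
    simp only
    rw [← Finset.sum_sub_distrib, Finset.sum_mul]
    apply Finset.sum_congr rfl
    intro i _
    have hst : (0 ≤ a i + t2') ↔ (0 ≤ a i + ts) := sign_stable (hne i) (habs i)
    unfold rr
    by_cases h : 0 ≤ a i + ts
    · rw [if_pos (hst.mpr h), if_pos h, if_pos h]; ring
    · rw [if_neg (fun hc => h (hst.mp hc)), if_neg h, if_neg h]; ring
  have h0 : F t2' - F ts = 0 := by
    rw [hconst t2' ht2'mem, hconst ts ⟨hts1.le, hts2.le⟩]; ring
  rw [h0] at hdiff
  have hsum0 : (∑ i, (if 0 ≤ a i + ts then μp else -μm)) = 0 := by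
    rcases mul_eq_zero.mp hdiff.symm with h | h
    · exact h
    · exfalso
      have e : t2' - ts = min (δ/2) ((t2 - ts)/2) := by rw [ht2']; ring
      rw [e] at h
      linarith
  rw [Finset.sum_ite, Finset.sum_const, Finset.sum_const, nsmul_eq_mul, nsmul_eq_mul] at hsum0
  set m := (Finset.univ.filter (fun i : Fin (n+1) => ¬ 0 ≤ a i + ts)).card with hmdef
  have hcards : (Finset.univ.filter (fun i : Fin (n+1) => 0 ≤ a i + ts)).card + m = n + 1 := by
    rw [hmdef, Finset.card_filter_add_card_filter_not]
    simp
  refine ⟨m, by omega, ?_⟩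
  have hcast : ((Finset.univ.filter (fun i : Fin (n+1) => 0 ≤ a i + ts)).card : ℝ)
      = (n : ℝ) + 1 - m := by
    have h2 : ((Finset.univ.filter (fun i : Fin (n+1) => 0 ≤ a i + ts)).card : ℝ) + (m : ℝ)
        = (n : ℝ) + 1 := by exact_mod_cast hcards
    linarith
  rw [hcast] at hsum0
  linarith


/-- For the homogeneous discrete crawler with `N = n+1` contact points and friction
coefficients `μ₋, μ₊ > 0`: the condition `m·μ₋ − (N−m)·μ₊ ≠ 0` for all `m ∈ {0,…,N}`
is equivalent to uniqueness of the minimizer of the dissipation on every line of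
fixed shape. -/
theorem stmt8 (n : ℕ) (hn : 1 ≤ n) (μm μp : ℝ) (hm : 0 < μm) (hp : 0 < μp) :
    (∀ m : ℕ, m ≤ n + 1 → (m : ℝ) * μm - ((n : ℝ) + 1 - m) * μp ≠ 0) ↔
    (∀ z : Fin n → ℝ, ∃! x : Fin (n + 1) → ℝ,
      (∀ i : Fin n, x i.succ - x i.castSucc = z i) ∧
      ∀ x' : Fin (n + 1) → ℝ, (∀ i : Fin n, x' i.succ - x' i.castSucc = z i) →
        (∑ i, if 0 ≤ x i then μp * x i else -(μm * x i)) ≤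
        (∑ i, if 0 ≤ x' i then μp * x' i else -(μm * x' i))) := by
  constructor
  · -- condition ⇒ unique minimizer on each line
    intro hcond z
    classical
    set a : Fin (n+1) → ℝ := fun i => ∑ j : Fin n, if (j : ℕ) < (i : ℕ) then z j else 0 with ha
    have hashape : ∀ i : Fin n, a i.succ - a i.castSucc = z i := by
      intro i
      rw [ha]
      simp only
      rw [← Finset.sum_sub_distrib]
      have hterm : ∀ j : Fin n,
          ((if (j : ℕ) < (i.succ : ℕ) then z j else 0) -
           (if (j : ℕ) < (i.castSucc : ℕ) then z j else 0)) = if j = i then z j else 0 := by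
        intro j
        simp only [Fin.val_succ, Fin.coe_castSucc]
        by_cases h1 : (j : ℕ) < (i : ℕ)
        · rw [if_pos (by omega), if_pos h1, if_neg (by omega : ¬ (j = i))]
          · ring
        · by_cases h2 : (j : ℕ) = (i : ℕ)
          · rw [if_pos (by omega), if_neg h1, if_pos (Fin.ext h2)]
            ring
          · rw [if_neg (by omega), if_neg h1, if_neg (fun hc => h2 (by rw [hc]))]
            ring
      rw [Finset.sum_congr rfl (fun j _ => hterm j)]
      simp
    obtain ⟨t0, ht0⟩ := exists_min n μm μp hm hp a
    refine ⟨fun i => a i + t0, ⟨?_, ?_⟩, ?_⟩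
    · intro i
      have := hashape i
      simp only
      linarith
    · intro x' hx'
      have hx'eq : ∀ j, x' j = a j + (x' 0 - a 0) :=
        shape_diff n a x' (fun i => by rw [hashape i, hx' i])
      have hre : ∀ i : Fin (n+1),
          (if 0 ≤ x' i then μp * x' i else -(μm * x' i)) = rr μm μp (a i + (x' 0 - a 0)) := by
        intro i
        rw [hx'eq i]
        rfl
      calc (∑ i, if 0 ≤ a i + t0 then μp * (a i + t0) else -(μm * (a i + t0)))
          = ∑ i, rr μm μp (a i + t0) := rfl
        _ ≤ ∑ i, rr μm μp (a i + (x' 0 - a 0)) := ht0 _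
        _ = ∑ i, if 0 ≤ x' i then μp * x' i else -(μm * x' i) :=
            (Finset.sum_congr rfl (fun i _ => hre i)).symm
    · intro y hy
      have hyeq : ∀ j, y j = a j + (y 0 - a 0) :=
        shape_diff n a y (fun i => by rw [hashape i, hy.1 i])
      set cy := y 0 - a 0 with hcy
      have hminy : ∀ t, (∑ i, rr μm μp (a i + cy)) ≤ ∑ i, rr μm μp (a i + t) := by
        intro t
        have hshape_t : ∀ i : Fin n,
            (fun j => a j + t) i.succ - (fun j => a j + t) i.castSucc = z i := by
          intro i
          have := hashape i
          simp only
          linarith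
        have h2 := hy.2 (fun j => a j + t) hshape_t
        have hre : ∀ i : Fin (n+1),
            (if 0 ≤ y i then μp * y i else -(μm * y i)) = rr μm μp (a i + cy) := by
          intro i
          rw [hyeq i]
          rfl
        calc (∑ i, rr μm μp (a i + cy))
            = ∑ i, if 0 ≤ y i then μp * y i else -(μm * y i) :=
              (Finset.sum_congr rfl (fun i _ => hre i)).symm
          _ ≤ ∑ i, if 0 ≤ a i + t then μp * (a i + t) else -(μm * (a i + t)) := h2
          _ = ∑ i, rr μm μp (a i + t) := rfl
      have hct : cy = t0 := by
        by_contra hne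
        rcases lt_or_gt_of_ne hne with hlt | hlt
        · obtain ⟨m, hm1, hm2⟩ := plateau n μm μp hm hp a cy t0 hlt hminy ht0
          exact hcond m hm1 hm2
        · obtain ⟨m, hm1, hm2⟩ := plateau n μm μp hm hp a t0 cy hlt ht0 hminy
          exact hcond m hm1 hm2
      funext j
      rw [hyeq j, hct]
  · -- unique minimizers ⇒ condition
    intro h m hmle heq
    classical
    have hm1 : 1 ≤ m := by
      by_contra h0
      have : m = 0 := by omega
      subst this
      push_cast at heq
      nlinarith [mul_pos (show (0:ℝ) < (n:ℝ)+1 by positivity) hp]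
    have hm2 : m ≤ n := by
      by_contra h0
      have : m = n + 1 := by omega
      subst this
      push_cast at heq
      nlinarith [mul_pos (show (0:ℝ) < (n:ℝ)+1 by positivity) hm]
    obtain ⟨w, hw, huniq⟩ := h (fun _ => (1:ℝ))
    set x : Fin (n+1) → ℝ := fun i => (i : ℝ) - m with hx
    set x' : Fin (n+1) → ℝ := fun i => (i : ℝ) - m + 1 with hx'
    set k : Fin (n+1) → ℝ := fun i => if 0 ≤ x i then μp else -μm with hk
    have hk_le : ∀ (i : Fin (n+1)) (s : ℝ), k i * s ≤ rr μm μp s := by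
      intro i s
      rw [rr_eq_max hm.le hp.le, hk]
      simp only
      split_ifs with h0
      · exact le_max_left _ _
      · have := le_max_right (μp * s) (-(μm * s))
        nlinarith [this]
    have hk_x : ∀ i, k i * x i = rr μm μp (x i) := by
      intro i
      rw [hk]
      unfold rr
      simp only
      split_ifs with h0 <;> ring
    have hk_x' : ∀ i, k i * x' i = rr μm μp (x' i) := by
      intro i
      simp only [hk, hx, hx']
      by_cases h0 : 0 ≤ (i : ℝ) - (m : ℝ)
      · rw [if_pos h0]
        unfold rr
        rw [if_pos (by linarith)]
      · rw [if_neg h0]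
        push_neg at h0
        have hi : (i : ℕ) < m := by
          have hcast : ((i : ℕ) : ℝ) < (m : ℝ) := by linarith
          exact_mod_cast hcast
        have hle : (i : ℝ) - m + 1 ≤ 0 := by
          have h2 : ((i : ℕ) : ℝ) + 1 ≤ (m : ℝ) := by exact_mod_cast hi
          linarith
        unfold rr
        rcases eq_or_lt_of_le hle with h1 | h1
        · rw [if_pos (le_of_eq h1.symm), h1]
          ring
        · rw [if_neg (not_le.mpr h1)]
          ring
    have hksum : (∑ i, k i) = 0 := by
      have hkval : ∀ i : Fin (n+1), k i = if m ≤ (i : ℕ) then μp else -μm := by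
        intro i
        rw [hk]
        simp only [hx]
        by_cases h0 : m ≤ (i : ℕ)
        · rw [if_pos h0, if_pos (by
            have : (m : ℝ) ≤ ((i : ℕ) : ℝ) := by exact_mod_cast h0
            linarith)]
        · rw [if_neg h0, if_neg (by
            push_neg at h0
            have : ((i : ℕ) : ℝ) < (m : ℝ) := by exact_mod_cast h0
            push_neg
            linarith)]
      rw [Finset.sum_congr rfl (fun i _ => hkval i)]
      rw [Fin.sum_univ_eq_sum_range (fun i => if m ≤ i then μp else -μm) (n+1)]
      rw [← Finset.sum_range_add_sum_Ico _ (show m ≤ n+1 by omega)]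
      have e1 : (∑ i ∈ Finset.range m, if m ≤ i then μp else -μm) = (m : ℝ) * (-μm) := by
        rw [Finset.sum_congr rfl (fun i hi => if_neg (by
          rw [Finset.mem_range] at hi; omega))]
        rw [Finset.sum_const, Finset.card_range, nsmul_eq_mul]
      have e2 : (∑ i ∈ Finset.Ico m (n+1), if m ≤ i then μp else -μm)
          = ((n : ℝ) + 1 - m) * μp := by
        rw [Finset.sum_congr rfl (fun i hi => if_pos (by
          rw [Finset.mem_Ico] at hi; omega))]
        rw [Finset.sum_const, Nat.card_Ico, nsmul_eq_mul]
        have : ((n + 1 - m : ℕ) : ℝ) = (n : ℝ) + 1 - m := by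
          push_cast [Nat.cast_sub (show m ≤ n + 1 by omega)]
          ring
        rw [this]
      rw [e1, e2]
      linarith
    -- x and x' are both minimizers
    have hxshape : ∀ i : Fin n, x i.succ - x i.castSucc = (1:ℝ) := by
      intro i
      simp only [hx, Fin.val_succ, Fin.coe_castSucc]
      push_cast
      ring
    have hx'shape : ∀ i : Fin n, x' i.succ - x' i.castSucc = (1:ℝ) := by
      intro i
      simp only [hx', Fin.val_succ, Fin.coe_castSucc]
      push_cast
      ring
    have hsum_eq : (∑ i, rr μm μp (x' i)) = ∑ i, rr μm μp (x i) := by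
      rw [← Finset.sum_congr rfl (fun i (_ : i ∈ Finset.univ) => hk_x' i),
          ← Finset.sum_congr rfl (fun i (_ : i ∈ Finset.univ) => hk_x i)]
      have hterm : ∀ i : Fin (n+1), k i * x' i = k i * x i + k i := by
        intro i
        simp only [hx, hx']
        ring
      rw [Finset.sum_congr rfl (fun i _ => hterm i), Finset.sum_add_distrib, hksum, add_zero]
    have hkey : ∀ y : Fin (n+1) → ℝ, (∀ i : Fin n, y i.succ - y i.castSucc = (1:ℝ)) →
        (∑ i, rr μm μp (x i)) ≤ ∑ i, rr μm μp (y i) := by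
      intro y hy
      have hyeq : ∀ j, y j = x j + (y 0 - x 0) :=
        shape_diff n x y (fun i => by rw [hxshape i, hy i])
      calc (∑ i, rr μm μp (x i)) = ∑ i, k i * x i :=
            (Finset.sum_congr rfl (fun i _ => hk_x i)).symm
        _ = ∑ i, k i * y i := by
            have hterm : ∀ i : Fin (n+1), k i * y i = k i * x i + k i * (y 0 - x 0) := by
              intro i
              rw [hyeq i]
              ring
            rw [Finset.sum_congr rfl (fun i _ => hterm i), Finset.sum_add_distrib,
              ← Finset.sum_mul, hksum, zero_mul, add_zero]
        _ ≤ ∑ i, rr μm μp (y i) := Finset.sum_le_sum (fun i _ => hk_le i (y i))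
    have hPx : (∀ i : Fin n, x i.succ - x i.castSucc = (1:ℝ)) ∧
        ∀ y : Fin (n + 1) → ℝ, (∀ i : Fin n, y i.succ - y i.castSucc = (1:ℝ)) →
          (∑ i, if 0 ≤ x i then μp * x i else -(μm * x i)) ≤
          (∑ i, if 0 ≤ y i then μp * y i else -(μm * y i)) := by
      refine ⟨hxshape, fun y hy => ?_⟩
      exact hkey y hy
    have hPx' : (∀ i : Fin n, x' i.succ - x' i.castSucc = (1:ℝ)) ∧
        ∀ y : Fin (n + 1) → ℝ, (∀ i : Fin n, y i.succ - y i.castSucc = (1:ℝ)) →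
          (∑ i, if 0 ≤ x' i then μp * x' i else -(μm * x' i)) ≤
          (∑ i, if 0 ≤ y i then μp * y i else -(μm * y i)) := by
      refine ⟨hx'shape, fun y hy => ?_⟩
      calc (∑ i, rr μm μp (x' i)) = ∑ i, rr μm μp (x i) := hsum_eq
        _ ≤ ∑ i, rr μm μp (y i) := hkey y hy
    have hxw : x = w := huniq x hPx
    have hx'w : x' = w := huniq x' hPx'
    have : x 0 = x' 0 := by rw [hxw, hx'w]
    simp only [hx, hx'] at this
    linarith
end

section
/- Let Ω = [a,b] ⊂ ℝ be a compact interval with a < b, and μ₋, μ₊ > 0. Define R : W^{1,2}(Ω,ℝ) → ℝ by R(u) = ∫_Ω (μ₊ u⁺(ξ) − μ₋ u⁻(ξ)) dξ, where u⁺, u⁻ are positive and negative parts. Then for every x ∈ W^{1,2}(Ω,ℝ), the function λ ↦ R(x + λ) on ℝ (adding the constant function λ) has a unique minimizer. -/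
/-!
A `W^{1,2}` function on `[a, b]` is continuous, so `F λ = R(x + λ)` is a continuous function
of `λ`, and it is coercive because `R u ≥ min μ₊ μ₋ * ‖u‖₁`; hence it attains its minimum.
If `l₁ < l₂` were two minimizers, then either `x + l₁ < 0 < x + l₂` at some point, where the
integrand is strictly convex, so that `F` at the midpoint drops below the minimum; or, by the
intermediate value theorem, `x + l₁ ≥ 0` or `x + l₂ ≤ 0` on all of `[a, b]`, and then `F` is
strictly monotone between `l₁` and `l₂`.
-/

open MeasureTheory Set Filter

noncomputable def friction (μm μp u : ℝ) : ℝ := μp * max u 0 - μm * min u 0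

/-- The functional `R` of the paper on `Ω = [a, b]`. -/
noncomputable def frictionCost (a b μm μp : ℝ) (u : ℝ → ℝ) : ℝ :=
  ∫ ξ in Icc a b, friction μm μp (u ξ)

section friction

variable {μm μp : ℝ}

theorem friction_of_nonneg {u : ℝ} (hu : 0 ≤ u) : friction μm μp u = μp * u := by
  simp [friction, hu]

theorem friction_of_nonpos {u : ℝ} (hu : u ≤ 0) : friction μm μp u = -(μm * u) := by
  simp [friction, hu]

theorem continuous_friction : Continuous (friction μm μp) := by
  unfold friction; fun_prop

theorem friction_strictMonoOn (hp : 0 < μp) : StrictMonoOn (friction μm μp) (Ici 0) :=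
  fun u hu v hv huv => by
    rw [friction_of_nonneg hu, friction_of_nonneg hv]
    exact mul_lt_mul_of_pos_left huv hp

theorem friction_strictAntiOn (hm : 0 < μm) : StrictAntiOn (friction μm μp) (Iic 0) :=
  fun u hu v hv huv => by
    rw [friction_of_nonpos hu, friction_of_nonpos hv, neg_lt_neg_iff]
    exact mul_lt_mul_of_pos_left huv hm

theorem min_mul_abs_le_friction (u : ℝ) :
    min μp μm * |u| ≤ friction μm μp u := by
  rcases le_total 0 u with hu | hu
  · rw [friction_of_nonneg hu, abs_of_nonneg hu]
    exact mul_le_mul_of_nonneg_right (min_le_left _ _) hu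
  · rw [friction_of_nonpos hu, abs_of_nonpos hu, ← mul_neg]
    exact mul_le_mul_of_nonneg_right (min_le_right _ _) (neg_nonneg.2 hu)

theorem friction_midpoint_le (hm : 0 ≤ μm) (hp : 0 ≤ μp) (u v : ℝ) :
    friction μm μp ((u + v) / 2) ≤ (friction μm μp u + friction μm μp v) / 2 := by
  have hmax : max ((u + v) / 2) 0 ≤ (max u 0 + max v 0) / 2 :=
    max_le (by linarith [le_max_left u 0, le_max_left v 0])
      (by linarith [le_max_right u 0, le_max_right v 0])
  have hmin : (min u 0 + min v 0) / 2 ≤ min ((u + v) / 2) 0 :=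
    le_min (by linarith [min_le_left u 0, min_le_left v 0])
      (by linarith [min_le_right u 0, min_le_right v 0])
  unfold friction
  nlinarith [mul_le_mul_of_nonneg_left hmax hp, mul_le_mul_of_nonneg_left hmin hm]

theorem friction_midpoint_lt (hm : 0 < μm) (hp : 0 < μp) {u v : ℝ} (hu : u < 0) (hv : 0 < v) :
    friction μm μp ((u + v) / 2) < (friction μm μp u + friction μm μp v) / 2 := by
  rw [friction_of_nonpos hu.le, friction_of_nonneg hv.le]
  rcases le_total 0 ((u + v) / 2) with h | h
  · rw [friction_of_nonneg h]; nlinarith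
  · rw [friction_of_nonpos h]; nlinarith

theorem ContinuousOn.friction {s : Set ℝ} {u : ℝ → ℝ} (hu : ContinuousOn u s) :
    ContinuousOn (fun ξ => friction μm μp (u ξ)) s :=
  continuous_friction.comp_continuousOn hu

end friction

theorem setIntegral_Icc_lt_of_continuousOn {a b : ℝ} (hab : a < b) {f g : ℝ → ℝ}
    (hf : ContinuousOn f (Icc a b)) (hg : ContinuousOn g (Icc a b))
    (hle : ∀ ξ ∈ Icc a b, f ξ ≤ g ξ) (hlt : ∃ c ∈ Icc a b, f c < g c) :
    ∫ ξ in Icc a b, f ξ < ∫ ξ in Icc a b, g ξ := by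
  simp only [integral_Icc_eq_integral_Ioc, ← intervalIntegral.integral_of_le hab.le]
  exact intervalIntegral.integral_lt_integral_of_continuousOn_of_le_of_exists_lt hab hf hg
    (fun ξ hξ => hle ξ (Ioc_subset_Icc_self hξ)) hlt

theorem IsPreconnected.forall_le_or_forall_ge {X α : Type*} [TopologicalSpace X] [LinearOrder α]
    [DenselyOrdered α] [TopologicalSpace α] [OrderClosedTopology α] {s : Set X}
    (hs : IsPreconnected s) {f : X → α} (hf : ContinuousOn f s) {p q : α} (hpq : p < q)
    (hgap : ∀ ξ ∈ s, f ξ ∉ Ioo p q) :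
    (∀ ξ ∈ s, f ξ ≤ p) ∨ ∀ ξ ∈ s, q ≤ f ξ := by
  by_contra! ⟨⟨ξ₁, hξ₁, h₁⟩, ξ₂, hξ₂, h₂⟩
  have h₁ : q ≤ f ξ₁ := not_lt.1 fun h => hgap ξ₁ hξ₁ ⟨h₁, h⟩
  have h₂ : f ξ₂ ≤ p := not_lt.1 fun h => hgap ξ₂ hξ₂ ⟨h, h₂⟩
  obtain ⟨c, hpc, hcq⟩ := exists_between hpq
  obtain ⟨ξ, hξ, hfξ⟩ := hs.intermediate_value hξ₂ hξ₁ hf ⟨h₂.trans hpc.le, hcq.le.trans h₁⟩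
  exact hgap ξ hξ (hfξ ▸ ⟨hpc, hcq⟩)

theorem continuousOn_Icc_of_eq_add_integral {a b : ℝ} (hab : a ≤ b) {x g : ℝ → ℝ}
    (hg : IntegrableOn g (Icc a b)) (hx : ∀ t ∈ Icc a b, x t = x a + ∫ s in a..t, g s) :
    ContinuousOn x (Icc a b) := by
  rw [← uIcc_of_le hab] at hg hx ⊢
  exact (continuousOn_const.add (intervalIntegral.continuousOn_primitive_interval hg)).congr hx

section frictionCost

variable {a b μm μp : ℝ} {x : ℝ → ℝ}

theorem continuousOn_friction_add_const (hx : ContinuousOn x (Icc a b)) (l : ℝ) :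
    ContinuousOn (fun ξ => friction μm μp (x ξ + l)) (Icc a b) :=
  (hx.add continuousOn_const).friction

theorem continuous_frictionCost_add_const (hab : a ≤ b) (hx : ContinuousOn x (Icc a b)) :
    Continuous fun lam => frictionCost a b μm μp (fun ξ => x ξ + lam) := by
  -- a continuous extension of `x` to `ℝ` has the same integrals over `[a, b]`
  set y := IccExtend hab ((Icc a b).domRestrict x)
  have hy : Continuous y :=
    continuous_IccExtend_iff.2 (continuousOn_iff_continuous_domRestrict.1 hx)
  have hxy : ∀ lam, frictionCost a b μm μp (fun ξ => x ξ + lam) =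
      ∫ ξ in Icc a b, friction μm μp (y ξ + lam) := fun lam =>
    setIntegral_congr_fun measurableSet_Icc fun ξ hξ => by
      simp only [y, IccExtend_of_mem _ _ hξ, domRestrict_apply]
  simp only [hxy]
  exact continuous_parametric_integral_of_continuous
    (f := fun lam ξ => friction μm μp (y ξ + lam)) (continuous_friction.comp (by fun_prop))
    isCompact_Icc

theorem min_mul_sub_le_frictionCost_add_const (hab : a ≤ b) (hm : 0 ≤ μm) (hp : 0 ≤ μp)
    (hx : ContinuousOn x (Icc a b)) (lam : ℝ) :
    min μp μm * (|lam| * (b - a) - ∫ ξ in Icc a b, |x ξ|) ≤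
      frictionCost a b μm μp (fun ξ => x ξ + lam) := by
  have habs : IntegrableOn (fun ξ => |x ξ|) (Icc a b) := hx.abs.integrableOn_Icc
  have hbound : IntegrableOn (fun ξ => min μp μm * (|lam| - |x ξ|)) (Icc a b) :=
    ((integrable_const _).sub habs).const_mul _
  calc min μp μm * (|lam| * (b - a) - ∫ ξ in Icc a b, |x ξ|)
      = ∫ ξ in Icc a b, min μp μm * (|lam| - |x ξ|) := by
        rw [integral_const_mul, integral_sub (integrable_const _) habs, setIntegral_const,
          Real.volume_real_Icc_of_le hab, smul_eq_mul, mul_comm (b - a)]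
    _ ≤ frictionCost a b μm μp (fun ξ => x ξ + lam) := by
        refine setIntegral_mono_on hbound (continuousOn_friction_add_const hx lam).integrableOn_Icc
          measurableSet_Icc fun ξ _ => le_trans ?_ (min_mul_abs_le_friction _)
        have := abs_sub_abs_le_abs_sub lam (-x ξ)
        rw [abs_neg, sub_neg_eq_add, add_comm] at this
        exact mul_le_mul_of_nonneg_left this (le_min hp hm)

theorem tendsto_frictionCost_add_const_cocompact (hab : a < b) (hm : 0 < μm) (hp : 0 < μp)
    (hx : ContinuousOn x (Icc a b)) :
    Tendsto (fun lam => frictionCost a b μm μp (fun ξ => x ξ + lam)) (cocompact ℝ) atTop := by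
  have hc : 0 < min μp μm * (b - a) := mul_pos (lt_min hp hm) (sub_pos.2 hab)
  refine tendsto_atTop_mono (fun lam => (min_mul_sub_le_frictionCost_add_const hab.le hm.le hp.le
    hx lam).trans_eq' ?_) (tendsto_atTop_add_const_right _ (-(min μp μm * ∫ ξ in Icc a b, |x ξ|))
      (tendsto_norm_cocompact_atTop.atTop_mul_const hc))
  rw [Real.norm_eq_abs]
  ring

theorem frictionCost_add_const_lt_of_nonneg (hab : a < b) (hp : 0 < μp)
    (hx : ContinuousOn x (Icc a b)) {l₁ l₂ : ℝ} (hl : l₁ < l₂)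
    (hnonneg : ∀ ξ ∈ Icc a b, 0 ≤ x ξ + l₁) :
    frictionCost a b μm μp (fun ξ => x ξ + l₁) < frictionCost a b μm μp (fun ξ => x ξ + l₂) := by
  have hlt : ∀ ξ ∈ Icc a b, friction μm μp (x ξ + l₁) < friction μm μp (x ξ + l₂) :=
    fun ξ hξ => friction_strictMonoOn hp (hnonneg ξ hξ)
      (mem_Ici.2 ((hnonneg ξ hξ).trans (by linarith))) (by linarith)
  exact setIntegral_Icc_lt_of_continuousOn hab (continuousOn_friction_add_const hx _)
    (continuousOn_friction_add_const hx _) (fun ξ hξ => (hlt ξ hξ).le)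
    ⟨a, left_mem_Icc.2 hab.le, hlt a (left_mem_Icc.2 hab.le)⟩

theorem frictionCost_add_const_lt_of_nonpos (hab : a < b) (hm : 0 < μm)
    (hx : ContinuousOn x (Icc a b)) {l₁ l₂ : ℝ} (hl : l₁ < l₂)
    (hnonpos : ∀ ξ ∈ Icc a b, x ξ + l₂ ≤ 0) :
    frictionCost a b μm μp (fun ξ => x ξ + l₂) < frictionCost a b μm μp (fun ξ => x ξ + l₁) := by
  have hlt : ∀ ξ ∈ Icc a b, friction μm μp (x ξ + l₂) < friction μm μp (x ξ + l₁) :=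
    fun ξ hξ => friction_strictAntiOn hm (mem_Iic.2 ((by linarith : x ξ + l₁ ≤ x ξ + l₂).trans
      (hnonpos ξ hξ))) (hnonpos ξ hξ) (by linarith)
  exact setIntegral_Icc_lt_of_continuousOn hab (continuousOn_friction_add_const hx _)
    (continuousOn_friction_add_const hx _) (fun ξ hξ => (hlt ξ hξ).le)
    ⟨a, left_mem_Icc.2 hab.le, hlt a (left_mem_Icc.2 hab.le)⟩

theorem frictionCost_add_midpoint_lt (hab : a < b) (hm : 0 < μm) (hp : 0 < μp)
    (hx : ContinuousOn x (Icc a b)) {l₁ l₂ : ℝ}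
    (hcross : ∃ ξ ∈ Icc a b, x ξ + l₁ < 0 ∧ 0 < x ξ + l₂) :
    frictionCost a b μm μp (fun ξ => x ξ + (l₁ + l₂) / 2) <
      (frictionCost a b μm μp (fun ξ => x ξ + l₁) +
        frictionCost a b μm μp (fun ξ => x ξ + l₂)) / 2 := by
  have hmid : ∀ ξ, x ξ + (l₁ + l₂) / 2 = ((x ξ + l₁) + (x ξ + l₂)) / 2 := fun ξ => by ring
  have hc₁ := continuousOn_friction_add_const (μm := μm) (μp := μp) hx l₁
  have hc₂ := continuousOn_friction_add_const (μm := μm) (μp := μp) hx l₂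
  simp only [frictionCost]
  rw [← integral_add hc₁.integrableOn_Icc hc₂.integrableOn_Icc, ← integral_div]
  obtain ⟨ξ₀, hξ₀, hneg, hpos⟩ := hcross
  refine setIntegral_Icc_lt_of_continuousOn hab (continuousOn_friction_add_const hx _)
    ((hc₁.add hc₂).div_const 2) (fun ξ _ => ?_) ⟨ξ₀, hξ₀, ?_⟩
  · rw [hmid]; exact friction_midpoint_le hm.le hp.le _ _
  · rw [hmid]; exact friction_midpoint_lt hm hp hneg hpos

theorem not_lt_of_forall_frictionCost_add_const_le (hab : a < b) (hm : 0 < μm) (hp : 0 < μp)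
    (hx : ContinuousOn x (Icc a b)) {l₁ l₂ : ℝ}
    (h₁ : ∀ l, frictionCost a b μm μp (fun ξ => x ξ + l₁) ≤
      frictionCost a b μm μp (fun ξ => x ξ + l))
    (h₂ : ∀ l, frictionCost a b μm μp (fun ξ => x ξ + l₂) ≤
      frictionCost a b μm μp (fun ξ => x ξ + l)) :
    ¬l₁ < l₂ := by
  intro hl
  by_cases hcross : ∃ ξ ∈ Icc a b, x ξ + l₁ < 0 ∧ 0 < x ξ + l₂
  · linarith [frictionCost_add_midpoint_lt hab hm hp hx hcross, h₁ ((l₁ + l₂) / 2),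
      h₂ ((l₁ + l₂) / 2)]
  have hgap : ∀ ξ ∈ Icc a b, x ξ ∉ Ioo (-l₂) (-l₁) := fun ξ hξ hmem =>
    hcross ⟨ξ, hξ, by linarith [hmem.2], by linarith [hmem.1]⟩
  rcases isPreconnected_Icc.forall_le_or_forall_ge hx (by linarith) hgap with hle | hge
  · exact (h₁ l₂).not_gt
      (frictionCost_add_const_lt_of_nonpos hab hm hx hl fun ξ hξ => by linarith [hle ξ hξ])
  · exact (h₂ l₁).not_gt
      (frictionCost_add_const_lt_of_nonneg hab hp hx hl fun ξ hξ => by linarith [hge ξ hξ])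

theorem existsUnique_forall_frictionCost_add_const_le (hab : a < b) (hm : 0 < μm) (hp : 0 < μp)
    (hx : ContinuousOn x (Icc a b)) :
    ∃! lam : ℝ, ∀ lam' : ℝ,
      frictionCost a b μm μp (fun ξ => x ξ + lam) ≤
        frictionCost a b μm μp (fun ξ => x ξ + lam') := by
  obtain ⟨lam, hlam⟩ := (continuous_frictionCost_add_const hab.le hx).exists_forall_le
    (tendsto_frictionCost_add_const_cocompact hab hm hp hx)
  refine ⟨lam, hlam, fun l hl => le_antisymm ?_ ?_⟩
  · exact not_lt.1 (not_lt_of_forall_frictionCost_add_const_le hab hm hp hx hlam hl)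
  · exact not_lt.1 (not_lt_of_forall_frictionCost_add_const_le hab hm hp hx hl hlam)

end frictionCost

/-- Homogeneous continuous crawler: with strictly positive friction coefficients,
for every `x ∈ W^{1,2}([a,b])` the map `λ ↦ R(x + λ)` has a unique minimizer. -/
theorem stmt11 (a b : ℝ) (hab : a < b) (μm μp : ℝ) (hm : 0 < μm) (hp : 0 < μp)
    (x : ℝ → ℝ)
    (hx : ∃ g : ℝ → ℝ, MemLp g 2 (volume.restrict (Set.Icc a b)) ∧
      ∀ t ∈ Set.Icc a b, x t = x a + ∫ s in a..t, g s) :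
    ∃! lam : ℝ, ∀ lam' : ℝ,
      (∫ ξ in Set.Icc a b, (μp * max (x ξ + lam) 0 - μm * min (x ξ + lam) 0)) ≤
      (∫ ξ in Set.Icc a b, (μp * max (x ξ + lam') 0 - μm * min (x ξ + lam') 0)) := by
  obtain ⟨g, hg, hxg⟩ := hx
  exact existsUnique_forall_frictionCost_add_const_le hab hm hp
    (continuousOn_Icc_of_eq_add_integral hab.le (hg.integrable one_le_two) hxg)
end

section
/- Let Ψ : X → [0,∞) be convex, lsc, positively 1-homogeneous on a Hilbert space X with Ψ(x) ≤ c_Ψ‖x‖, and R : [0,T] × X → [0,∞) a Ψ-regular dissipation potential (each R(t,·) convex, continuous, positively 1-homogeneous; α_* Ψ(x) ≤ R(t,x) ≤ α* Ψ(x); |R(t,x) − R(s,x)| ≤ Λ|t−s|Ψ(x)). Suppose moreover Ψ(χ(z,v)) ≥ c₁‖v‖ − c₂‖z‖ for all (z,v). Define Ψ_sh(w) = inf_v Ψ(χ(w,v)) and R_sh(t,w) = inf_v R(t,χ(w,v)). Then R_sh is a Ψ_sh-regular dissipation potential with constants α_*, α*, and Λ_sh = (α*/α_*)·Λ, and Ψ_sh(w)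 ≤ c′‖w‖ for some c′ > 0. -/
open Set Filter Topology

lemma stmt13_iInf_surj {Y : Type*} [Nonempty Y] (g : Y → ℝ) {e : Y → Y}
    (he : Function.Surjective e) : (⨅ v, g (e v)) = ⨅ v, g v := by
  rw [iInf, iInf, show (fun v => g (e v)) = g ∘ e from rfl, Set.range_comp,
    he.range_eq, Set.image_univ]

theorem stmt13_shape {Z Y : Type*}
    [NormedAddCommGroup Z] [NormedSpace ℝ Z]
    [NormedAddCommGroup Y] [NormedSpace ℝ Y]
    (F : Z × Y → ℝ) (hF0 : ∀ p, 0 ≤ F p)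
    (hFconv : ConvexOn ℝ Set.univ F)
    (hFhom : ∀ c : ℝ, 0 ≤ c → ∀ p, F (c • p) = c * F p)
    (M : ℝ) (hM : ∀ p, F p ≤ M * ‖p‖) :
    (∀ w : Z, 0 ≤ ⨅ v : Y, F (w, v)) ∧
    ConvexOn ℝ Set.univ (fun w : Z => ⨅ v : Y, F (w, v)) ∧
    Continuous (fun w : Z => ⨅ v : Y, F (w, v)) ∧
    (∀ c : ℝ, 0 ≤ c → ∀ w : Z, (⨅ v : Y, F (c • w, v)) = c * ⨅ v : Y, F (w, v)) ∧
    (∀ w : Z, (⨅ v : Y, F (w, v)) ≤ M * ‖w‖) := by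
  have bdd : ∀ w : Z, BddBelow (Set.range fun v : Y => F (w, v)) := by
    intro w; exact ⟨0, by rintro x ⟨v, rfl⟩; exact hF0 _⟩
  have hnn : ∀ w : Z, 0 ≤ ⨅ v : Y, F (w, v) := fun w => le_ciInf fun v => hF0 _
  have hbound : ∀ w : Z, (⨅ v : Y, F (w, v)) ≤ M * ‖w‖ := by
    intro w
    refine (ciInf_le (bdd w) 0).trans ?_
    have : ‖((w, (0:Y)) : Z × Y)‖ = ‖w‖ := by
      simp [Prod.norm_def, max_eq_left (norm_nonneg w)]
    simpa [this] using hM (w, (0:Y))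
  have hconv : ConvexOn ℝ Set.univ (fun w : Z => ⨅ v : Y, F (w, v)) := by
    refine ⟨convex_univ, fun w₁ _ w₂ _ a b ha hb hab => ?_⟩
    refine le_of_forall_pos_le_add fun ε hε => ?_
    obtain ⟨v₁, hv₁⟩ := exists_lt_of_ciInf_lt
      (show (⨅ v : Y, F (w₁, v)) < (⨅ v : Y, F (w₁, v)) + ε by linarith)
    obtain ⟨v₂, hv₂⟩ := exists_lt_of_ciInf_lt
      (show (⨅ v : Y, F (w₂, v)) < (⨅ v : Y, F (w₂, v)) + ε by linarith)
    have key : (⨅ v : Y, F (a • w₁ + b • w₂, v)) ≤ F (a • (w₁, v₁) + b • (w₂, v₂)) := by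
      refine (ciInf_le (bdd _) (a • v₁ + b • v₂)).trans_eq ?_
      rfl
    have h2 : F (a • (w₁, v₁) + b • (w₂, v₂)) ≤ a * F (w₁, v₁) + b * F (w₂, v₂) :=
      hFconv.2 (Set.mem_univ _) (Set.mem_univ _) ha hb hab
    have h3 : a * F (w₁, v₁) + b * F (w₂, v₂)
        ≤ a * ((⨅ v : Y, F (w₁, v)) + ε) + b * ((⨅ v : Y, F (w₂, v)) + ε) := by
      exact add_le_add (mul_le_mul_of_nonneg_left hv₁.le ha)
        (mul_le_mul_of_nonneg_left hv₂.le hb)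
    have : a * ((⨅ v : Y, F (w₁, v)) + ε) + b * ((⨅ v : Y, F (w₂, v)) + ε)
        = a * (⨅ v : Y, F (w₁, v)) + b * (⨅ v : Y, F (w₂, v)) + ε := by
      have : a + b = 1 := hab; nlinarith [this]
    simp only [smul_eq_mul]
    linarith [key.trans (h2.trans h3)]
  have hhom : ∀ c : ℝ, 0 ≤ c → ∀ w : Z,
      (⨅ v : Y, F (c • w, v)) = c * ⨅ v : Y, F (w, v) := by
    intro c hc w
    rcases eq_or_lt_of_le hc with rfl | hc'
    · have h0 : F (0 : Z × Y) = 0 := by simpa using hFhom 0 le_rfl 0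
      refine le_antisymm ?_ (by simpa using hnn ((0:ℝ) • w))
      have := ciInf_le (bdd ((0:ℝ) • w)) (0:Y)
      simpa [h0, Prod.mk_zero_zero] using this
    · have hsurj : Function.Surjective (fun v : Y => c • v) := fun v =>
        ⟨c⁻¹ • v, by simp [smul_smul, mul_inv_cancel₀ hc'.ne']⟩
      calc (⨅ v : Y, F (c • w, v)) = ⨅ v : Y, F (c • w, c • v) :=
            (stmt13_iInf_surj (fun v => F (c • w, v)) hsurj).symm
        _ = ⨅ v : Y, c * F (w, v) := by
            refine iInf_congr fun v => ?_
            rw [show ((c • w, c • v) : Z × Y) = c • ((w, v) : Z × Y) from rfl, hFhom c hc]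
        _ = c * ⨅ v : Y, F (w, v) := (Real.mul_iInf_of_nonneg hc _).symm
  have hcont : Continuous (fun w : Z => ⨅ v : Y, F (w, v)) := by
    rw [← continuousOn_univ]
    refine ((hconv.continuousOn_tfae isOpen_univ Set.univ_nonempty).out 3 1).mp ?_
    refine ⟨0, Set.mem_univ 0, |M| + 1, ?_⟩
    rw [Filter.eventually_map]
    have hball : Metric.ball (0:Z) 1 ∈ 𝓝 (0:Z) := Metric.ball_mem_nhds _ one_pos
    filter_upwards [hball] with w hw
    have hw1 : ‖w‖ < 1 := by simpa using hw
    have : (⨅ v : Y, F (w, v)) ≤ M * ‖w‖ := hbound w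
    nlinarith [abs_nonneg M, le_abs_self M, norm_nonneg w]
  exact ⟨hnn, hconv, hcont, hhom, hbound⟩

/-- If `R` is a `Ψ`-regular time-dependent dissipation potential and `Ψ` satisfies the
coercivity bound `Ψ(χ(z,v)) ≥ c₁‖v‖ − c₂‖z‖`, then the shape-restricted dissipation
`R_sh(t,w) = inf_v R(t, χ(w,v))` is a `Ψ_sh`-regular dissipation potential with
constants `α_*, α*` and `Λ_sh = (α*/α_*)Λ`, where `Ψ_sh(w) = inf_v Ψ(χ(w,v))`
satisfies `Ψ_sh(w) ≤ c′‖w‖`. -/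
theorem stmt13 {X Z Y : Type*}
    [NormedAddCommGroup X] [InnerProductSpace ℝ X] [CompleteSpace X]
    [NormedAddCommGroup Z] [InnerProductSpace ℝ Z] [CompleteSpace Z]
    [NormedAddCommGroup Y] [InnerProductSpace ℝ Y] [CompleteSpace Y]
    (χ : (Z × Y) ≃L[ℝ] X)
    (T : ℝ) (hT : 0 < T)
    (Ψ : X → ℝ) (hΨ0 : ∀ x, 0 ≤ Ψ x)
    (hΨconv : ConvexOn ℝ Set.univ Ψ)
    (hΨlsc : LowerSemicontinuous Ψ)
    (hΨhom : ∀ c : ℝ, 0 ≤ c → ∀ x, Ψ (c • x) = c * Ψ x)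
    (cΨ : ℝ) (hcΨ : 0 < cΨ) (hΨbound : ∀ x, Ψ x ≤ cΨ * ‖x‖)
    (R : ℝ → X → ℝ)
    (hR0 : ∀ t ∈ Set.Icc (0:ℝ) T, ∀ x, 0 ≤ R t x)
    (hRconv : ∀ t ∈ Set.Icc (0:ℝ) T, ConvexOn ℝ Set.univ (R t))
    (hRcont : ∀ t ∈ Set.Icc (0:ℝ) T, Continuous (R t))
    (hRhom : ∀ t ∈ Set.Icc (0:ℝ) T, ∀ c : ℝ, 0 ≤ c → ∀ x, R t (c • x) = c * R t x)
    (αs αb : ℝ) (hαs : 0 < αs) (hαle : αs ≤ αb)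
    (hΨ1 : ∀ t ∈ Set.Icc (0:ℝ) T, ∀ x, αs * Ψ x ≤ R t x ∧ R t x ≤ αb * Ψ x)
    (Λ : ℝ) (hΛ : 0 < Λ)
    (hΨ2 : ∀ t ∈ Set.Icc (0:ℝ) T, ∀ s ∈ Set.Icc (0:ℝ) T, ∀ x,
      |R t x - R s x| ≤ Λ * |t - s| * Ψ x)
    (c₁ c₂ : ℝ) (hc₁ : 0 < c₁) (hc₂ : 0 < c₂)
    (hcoer : ∀ (z : Z) (v : Y), c₁ * ‖v‖ - c₂ * ‖z‖ ≤ Ψ (χ (z, v))) :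
    -- `Ψ_sh` is convex, lsc, positively 1-homogeneous and bounded by `c′‖·‖`
    (ConvexOn ℝ Set.univ (fun w : Z => ⨅ v : Y, Ψ (χ (w, v))) ∧
      LowerSemicontinuous (fun w : Z => ⨅ v : Y, Ψ (χ (w, v))) ∧
      (∀ c : ℝ, 0 ≤ c → ∀ w : Z,
        (⨅ v : Y, Ψ (χ (c • w, v))) = c * ⨅ v : Y, Ψ (χ (w, v))) ∧
      ∃ c' > 0, ∀ w : Z, (⨅ v : Y, Ψ (χ (w, v))) ≤ c' * ‖w‖) ∧
    -- (Ψ0) for `R_sh`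
    (∀ t ∈ Set.Icc (0:ℝ) T,
      ConvexOn ℝ Set.univ (fun w : Z => ⨅ v : Y, R t (χ (w, v))) ∧
      Continuous (fun w : Z => ⨅ v : Y, R t (χ (w, v))) ∧
      ∀ c : ℝ, 0 ≤ c → ∀ w : Z,
        (⨅ v : Y, R t (χ (c • w, v))) = c * ⨅ v : Y, R t (χ (w, v))) ∧
    -- (Ψ1) for `R_sh` with the same constants
    (∀ t ∈ Set.Icc (0:ℝ) T, ∀ w : Z,
      αs * (⨅ v : Y, Ψ (χ (w, v))) ≤ (⨅ v : Y, R t (χ (w, v))) ∧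
      (⨅ v : Y, R t (χ (w, v))) ≤ αb * ⨅ v : Y, Ψ (χ (w, v))) ∧
    -- (Ψ2) for `R_sh` with `Λ_sh = (α*/α_*)·Λ`
    (∀ t ∈ Set.Icc (0:ℝ) T, ∀ s ∈ Set.Icc (0:ℝ) T, ∀ w : Z,
      |(⨅ v : Y, R t (χ (w, v))) - ⨅ v : Y, R s (χ (w, v))| ≤
        (αb / αs) * Λ * |t - s| * ⨅ v : Y, Ψ (χ (w, v))) := by
  have hαb0 : (0:ℝ) ≤ αb := le_trans hαs.le hαle
  set χL : (Z × Y) →L[ℝ] X := (χ : (Z × Y) →L[ℝ] X) with hχL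
  set M : ℝ := cΨ * ‖χL‖ with hM
  have hM0 : 0 ≤ M := mul_nonneg hcΨ.le (ContinuousLinearMap.opNorm_nonneg χL)
  have hχeq : ∀ p : Z × Y, χ p = χL p := fun p => rfl
  -- composed function `Ψ ∘ χ`
  have hFΨ := stmt13_shape (fun p : Z × Y => Ψ (χ p)) (fun p => hΨ0 _)
    (by
      refine ⟨convex_univ, fun p _ q _ a b ha hb hab => ?_⟩
      have h := hΨconv.2 (Set.mem_univ (χ p)) (Set.mem_univ (χ q)) ha hb hab
      simpa [map_add, map_smul] using h)
    (fun c hc p => by simp only [map_smul]; exact hΨhom c hc _)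
    M
    (fun p => by
      refine (hΨbound _).trans ?_
      rw [hM, mul_assoc]
      exact mul_le_mul_of_nonneg_left (by rw [hχeq p]; exact χL.le_opNorm p) hcΨ.le)
  obtain ⟨hΨnn, hΨc, hΨcont, hΨh, hΨb⟩ := hFΨ
  -- composed functions `R t ∘ χ`
  have hFR : ∀ t ∈ Set.Icc (0:ℝ) T,
      (∀ w : Z, 0 ≤ ⨅ v : Y, R t (χ (w, v))) ∧
      ConvexOn ℝ Set.univ (fun w : Z => ⨅ v : Y, R t (χ (w, v))) ∧
      Continuous (fun w : Z => ⨅ v : Y, R t (χ (w, v))) ∧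
      (∀ c : ℝ, 0 ≤ c → ∀ w : Z,
        (⨅ v : Y, R t (χ (c • w, v))) = c * ⨅ v : Y, R t (χ (w, v))) ∧
      (∀ w : Z, (⨅ v : Y, R t (χ (w, v))) ≤ (αb * M) * ‖w‖) := by
    intro t ht
    exact stmt13_shape (fun p : Z × Y => R t (χ p)) (fun p => hR0 t ht _)
      (by
        refine ⟨convex_univ, fun p _ q _ a b ha hb hab => ?_⟩
        have h := (hRconv t ht).2 (Set.mem_univ (χ p)) (Set.mem_univ (χ q)) ha hb hab
        simpa [map_add, map_smul] using h)
      (fun c hc p => by simp only [map_smul]; exact hRhom t ht c hc _)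
      (αb * M)
      (fun p => by
        refine (hΨ1 t ht (χ p)).2.trans ?_
        rw [mul_assoc, hM, mul_assoc]
        refine mul_le_mul_of_nonneg_left ((hΨbound _).trans ?_) hαb0
        exact mul_le_mul_of_nonneg_left (by rw [hχeq p]; exact χL.le_opNorm p) hcΨ.le)
  -- bddBelow helpers
  have bddΨ : ∀ w : Z, BddBelow (Set.range fun v : Y => Ψ (χ (w, v))) :=
    fun w => ⟨0, by rintro x ⟨v, rfl⟩; exact hΨ0 _⟩
  have bddR : ∀ t ∈ Set.Icc (0:ℝ) T, ∀ w : Z,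
      BddBelow (Set.range fun v : Y => R t (χ (w, v))) :=
    fun t ht w => ⟨0, by rintro x ⟨v, rfl⟩; exact hR0 t ht _⟩
  -- (Ψ1) for the shapes
  have hΨ1sh : ∀ t ∈ Set.Icc (0:ℝ) T, ∀ w : Z,
      αs * (⨅ v : Y, Ψ (χ (w, v))) ≤ (⨅ v : Y, R t (χ (w, v))) ∧
      (⨅ v : Y, R t (χ (w, v))) ≤ αb * ⨅ v : Y, Ψ (χ (w, v)) := by
    intro t ht w
    constructor
    · rw [Real.mul_iInf_of_nonneg hαs.le]
      exact ciInf_mono ⟨0, by rintro x ⟨v, rfl⟩; exact mul_nonneg hαs.le (hΨ0 _)⟩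
        fun v => (hΨ1 t ht _).1
    · rw [Real.mul_iInf_of_nonneg hαb0]
      exact ciInf_mono (bddR t ht w) fun v => (hΨ1 t ht _).2
  -- (Ψ2) for the shapes : one-sided estimate
  have key : ∀ t ∈ Set.Icc (0:ℝ) T, ∀ s ∈ Set.Icc (0:ℝ) T, ∀ w : Z,
      (⨅ v : Y, R t (χ (w, v))) - (⨅ v : Y, R s (χ (w, v))) ≤
        (αb / αs) * Λ * |t - s| * ⨅ v : Y, Ψ (χ (w, v)) := by
    intro t ht s hs w
    set k : ℝ := Λ * |t - s| / αs with hk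
    have hk0 : 0 ≤ k := div_nonneg (mul_nonneg hΛ.le (abs_nonneg _)) hαs.le
    have hpt : ∀ v : Y, R t (χ (w, v)) ≤ (1 + k) * R s (χ (w, v)) := by
      intro v
      have h2 := (abs_le.mp (hΨ2 t ht s hs (χ (w, v)))).2
      have h3 := (hΨ1 s hs (χ (w, v))).1
      have hmul := mul_le_mul_of_nonneg_left h3 hk0
      have he : k * (αs * Ψ (χ (w, v))) = Λ * |t - s| * Ψ (χ (w, v)) := by
        rw [hk]; field_simp
      nlinarith [hmul, h2, he]
    have h4 : (⨅ v : Y, R t (χ (w, v))) ≤ (1 + k) * ⨅ v : Y, R s (χ (w, v)) := by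
      rw [Real.mul_iInf_of_nonneg (by linarith)]
      exact ciInf_mono (bddR t ht w) hpt
    have h5 := (hΨ1sh s hs w).2
    have h6 : k * (⨅ v : Y, R s (χ (w, v))) ≤ k * (αb * ⨅ v : Y, Ψ (χ (w, v))) :=
      mul_le_mul_of_nonneg_left h5 hk0
    have h7 : k * (αb * ⨅ v : Y, Ψ (χ (w, v)))
        = (αb / αs) * Λ * |t - s| * ⨅ v : Y, Ψ (χ (w, v)) := by
      rw [hk]; ring
    have e : (1 + k) * (⨅ v : Y, R s (χ (w, v)))
        = (⨅ v : Y, R s (χ (w, v))) + k * ⨅ v : Y, R s (χ (w, v)) := by ring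
    linarith [h4, h6, h7]
  refine ⟨⟨hΨc, hΨcont.lowerSemicontinuous, hΨh, M + 1, by linarith, fun w =>
      (hΨb w).trans (mul_le_mul_of_nonneg_right (by linarith) (norm_nonneg w))⟩,
    fun t ht => ⟨(hFR t ht).2.1, (hFR t ht).2.2.1, (hFR t ht).2.2.2.1⟩,
    hΨ1sh, ?_⟩
  intro t ht s hs w
  rw [abs_sub_le_iff]
  refine ⟨key t ht s hs w, ?_⟩
  have := key s hs t ht w
  rwa [abs_sub_comm] at this
end
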